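/- For every τ ∈ ℂ with Im τ > 0, the derivative of the Jacobi theta series in z at z = 0 satisfies (2πi)^{−1} · ∂ϑ/∂z(τ, 0) = η(τ)³, where η(τ) = exp(πiτ/12) ∏_{n≥1} (1 − exp(2πinτ)) is the Dedekind eta function; that is, ∂ϑ/∂z(τ,0) = 2πi · exp(πiτ/4) · ∏_{n≥1} (1 − exp(2πinτ))³. -/

import Mathlib

open Complex

/-- The Jacobi theta series
`ϑ(τ,z) = Σ_{n∈ℤ} (−1)^n exp(πi(2n+1)²τ/4 + πi(2n+1)z)`. -/
noncomputable def thetaJ (τ z : ℂ) : ℂ :=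
  ∑' n : ℤ, (-1 : ℂ) ^ n *
    Complex.exp (Real.pi * Complex.I * ((2 * n + 1) ^ 2 * τ / 4 + (2 * n + 1) * z))

/-
Let `c_N(k) = (q)_{2N} / ((q)_{N+k} (q)_{N-k}) · q^{k(k+1)/2}` be the coefficient of `y^k` in the
finite triple product `∏_{j<N} (1 + y q^{j+1}) (1 + y⁻¹ q^j)`; multiplying by the next factor
gives a three-term recursion in `N`. For the value `E_N = ∑ (-1)^k c_N(k)` at `y = -1` and the
odd moment `M_N = ∑ (-1)^k (2k+1) c_N(k)` (essentially the derivative at `y = -1`) it becomes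
`E_{N+1} = (1 - q^N)(1 - q^{N+1}) E_N` and
`M_{N+1} = (1 - q^N)(1 - q^{N+1}) M_N + 2 q^N (1 - q) E_N`.
The factor `1 - q^0` kills `E_1`, hence `M_{N+1} = 2 (q)_{N+1} (q)_N`. As `N → ∞`,
`c_N(k) → q^{k(k+1)/2} / (q)_∞` with a bound uniform in `N`, and dominated convergence yields
Jacobi's identity `∑_k (-1)^k (2k+1) q^{k(k+1)/2} = 2 (q)_∞³`. Finally
`ϑ(τ, z) = e^{πi(τ/4 + z)} θ(z + τ/2 + 1/2, τ)` with `θ = jacobiTheta₂`, and differentiating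
at `z = 0` produces exactly this series with `q = e^{2πiτ}`.
-/

open Function

def triangular (k : ℤ) : ℤ := k * (k + 1) / 2

lemma two_mul_triangular (k : ℤ) : 2 * triangular k = k * (k + 1) := by
  obtain ⟨c, hc⟩ := Int.even_mul_succ_self k
  simp only [triangular, hc, ← two_mul]
  omega

lemma triangular_sub_one (k : ℤ) : triangular (k - 1) = triangular k - k := by
  have h₁ := two_mul_triangular (k - 1)
  have h₂ := two_mul_triangular k
  linarith

lemma triangular_add_one (k : ℤ) : triangular (k + 1) = triangular k + k + 1 := by
  have h₁ := two_mul_triangular (k + 1)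
  have h₂ := two_mul_triangular k
  linarith

lemma abs_sub_one_le_triangular (k : ℤ) : |k| - 1 ≤ triangular k := by
  have h := two_mul_triangular k
  rcases abs_cases k with ⟨hk, hk'⟩ | ⟨hk, hk'⟩
  · nlinarith [sq_nonneg (k - 1)]
  · have : 0 ≤ (k + 1) * (k + 2) := by
      rcases (show k = -1 ∨ k ≤ -2 by omega) with rfl | hk₂
      · norm_num
      · nlinarith
    nlinarith

section alternatingSums

variable {K : Type*} [Field K]

noncomputable def altSum (f : ℤ → K) : K := ∑ᶠ k, (-1 : K) ^ k * f k

noncomputable def altOddMoment (f : ℤ → K) : K := ∑ᶠ k, (-1 : K) ^ k * (2 * k + 1) * f k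

lemma finsum_mul_three_term {f : ℤ → K} (hf : f.HasFiniteSupport) (w : ℤ → K) (a b c : K) :
    ∑ᶠ k, w k * (a * f k + b * f (k - 1) + c * f (k + 1))
      = a * ∑ᶠ k, w k * f k + b * ∑ᶠ k, w (k + 1) * f k + c * ∑ᶠ k, w (k - 1) * f k := by
  have hf_sub : (fun k => f (k - 1)).HasFiniteSupport := hf.preimage sub_left_injective.injOn
  have hf_add : (fun k => f (k + 1)).HasFiniteSupport :=
    hf.preimage (add_left_injective _).injOn
  have h₁ : ∑ᶠ k, w k * f (k - 1) = ∑ᶠ k, w (k + 1) * f k := by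
    rw [← finsum_comp_equiv (Equiv.addRight 1)]
    simp
  have h₂ : ∑ᶠ k, w k * f (k + 1) = ∑ᶠ k, w (k - 1) * f k := by
    rw [← finsum_comp_equiv (Equiv.subRight 1)]
    simp
  have s₀ := (hf.fun_mul_right w).fun_mul_right fun _ => a
  have s₁ := (hf_sub.fun_mul_right w).fun_mul_right fun _ => b
  have s₂ := (hf_add.fun_mul_right w).fun_mul_right fun _ => c
  simp only [mul_add, mul_left_comm (w _)]
  rw [finsum_add_distrib (s₀.fun_add s₁) s₂, finsum_add_distrib s₀ s₁, ← mul_finsum,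
    ← mul_finsum, ← mul_finsum, h₁, h₂]

lemma altSum_three_term {f : ℤ → K} (hf : f.HasFiniteSupport) (a b c : K) :
    altSum (fun k => a * f k + b * f (k - 1) + c * f (k + 1)) = (a - b - c) * altSum f := by
  have hw : ∀ k : ℤ, (-1 : K) ^ (k + 1) = -(-1) ^ k ∧ (-1 : K) ^ (k - 1) = -(-1) ^ k := fun k =>
    ⟨by rw [zpow_add_one₀ (by norm_num)]; ring, by rw [zpow_sub_one₀ (by norm_num)]; ring⟩
  simp only [altSum, finsum_mul_three_term hf, (hw _).1, (hw _).2, neg_mul, finsum_neg_distrib]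
  ring

lemma altOddMoment_three_term {f : ℤ → K} (hf : f.HasFiniteSupport) (a b c : K) :
    altOddMoment (fun k => a * f k + b * f (k - 1) + c * f (k + 1))
      = (a - b - c) * altOddMoment f + 2 * (c - b) * altSum f := by
  have hM : (fun k : ℤ => (-1 : K) ^ k * (2 * k + 1) * f k).HasFiniteSupport := by fun_prop
  have hE : (fun k : ℤ => 2 * ((-1 : K) ^ k * f k)).HasFiniteSupport := by fun_prop
  have h₁ : ∑ᶠ k : ℤ, (-1 : K) ^ (k + 1) * (2 * ↑(k + 1) + 1) * f k
      = -(altOddMoment f + 2 * altSum f) := by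
    rw [altOddMoment, altSum, mul_finsum, ← finsum_add_distrib hM hE, ← finsum_neg_distrib]
    refine finsum_congr fun k => ?_
    rw [zpow_add_one₀ (by norm_num)]
    push_cast
    ring
  have h₂ : ∑ᶠ k : ℤ, (-1 : K) ^ (k - 1) * (2 * ↑(k - 1) + 1) * f k
      = -(altOddMoment f - 2 * altSum f) := by
    rw [altOddMoment, altSum, mul_finsum, ← finsum_sub_distrib hM hE, ← finsum_neg_distrib]
    refine finsum_congr fun k => ?_
    rw [zpow_sub_one₀ (by norm_num)]
    push_cast
    ring
  have h := finsum_mul_three_term hf (fun k : ℤ => (-1 : K) ^ k * (2 * k + 1)) a b c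
  rw [altOddMoment, h, h₁, h₂, ← altOddMoment]
  ring

end alternatingSums

section qPochhammer

variable {K : Type*} [Field K]

def qPochhammer (q : K) (n : ℕ) : K := ∏ i ∈ Finset.range n, (1 - q ^ (i + 1))

/-- `1 / (q)_m`, set to `0` for `m < 0` (where `(q)_m` has a pole); with this convention
`qPochhammerInv_sub_one` holds for every `m : ℤ`. -/
def qPochhammerInv (q : K) (m : ℤ) : K := if 0 ≤ m then (qPochhammer q m.toNat)⁻¹ else 0

lemma qPochhammer_succ (q : K) (n : ℕ) :
    qPochhammer q (n + 1) = qPochhammer q n * (1 - q ^ (n + 1)) :=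
  Finset.prod_range_succ _ _

variable {q : K}

lemma qPochhammerInv_of_neg {m : ℤ} (hm : m < 0) : qPochhammerInv q m = 0 :=
  if_neg hm.not_ge

lemma qPochhammerInv_sub_one (hq : ∀ n : ℕ, q ^ (n + 1) ≠ 1) (m : ℤ) :
    qPochhammerInv q (m - 1) = (1 - q ^ m) * qPochhammerInv q m := by
  rcases lt_trichotomy m 0 with hm | rfl | hm
  · rw [qPochhammerInv_of_neg hm, qPochhammerInv_of_neg (by omega), mul_zero]
  · simp [qPochhammerInv_of_neg]
  · lift m to ℕ using hm.le
    obtain ⟨n, rfl⟩ := Nat.exists_eq_add_one_of_ne_zero (by omega : m ≠ 0)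
    have hn : ((n + 1 : ℕ) : ℤ) - 1 = n := by omega
    rw [hn, qPochhammerInv, qPochhammerInv, if_pos (by omega), if_pos (by omega),
      Int.toNat_natCast, Int.toNat_natCast, qPochhammer_succ, zpow_natCast, mul_inv, mul_left_comm,
      mul_inv_cancel₀ (sub_ne_zero.2 (hq n).symm), mul_one]

def tripleCoeff (q : K) (N : ℕ) (k : ℤ) : K :=
  qPochhammer q (2 * N) * qPochhammerInv q (N + k) * qPochhammerInv q (N - k) * q ^ triangular k

lemma tripleCoeff_zero (k : ℤ) : tripleCoeff q 0 k = if k = 0 then 1 else 0 := by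
  rcases lt_trichotomy k 0 with hk | rfl | hk
  · simp [tripleCoeff, qPochhammerInv_of_neg hk, hk.ne]
  · simp [tripleCoeff, qPochhammerInv, qPochhammer, triangular]
  · simp [tripleCoeff, qPochhammerInv_of_neg (neg_neg_of_pos hk), hk.ne']

lemma hasFiniteSupport_tripleCoeff (q : K) (N : ℕ) : (tripleCoeff q N).HasFiniteSupport := by
  refine (Set.finite_Icc (-(N : ℤ)) N).subset fun k hk => ?_
  by_contra h
  rw [Set.mem_Icc, not_and_or, not_le, not_le] at h
  apply hk
  rcases h with h | h
  · simp [tripleCoeff, qPochhammerInv_of_neg (by omega : (N : ℤ) + k < 0)]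
  · simp [tripleCoeff, qPochhammerInv_of_neg (by omega : (N : ℤ) - k < 0)]

lemma tripleCoeff_succ (hq₀ : q ≠ 0) (hq : ∀ n : ℕ, q ^ (n + 1) ≠ 1) (N : ℕ) (k : ℤ) :
    tripleCoeff q (N + 1) k = (1 + q ^ (2 * N + 1)) * tripleCoeff q N k
      + q ^ (N + 1) * tripleCoeff q N (k - 1) + q ^ N * tripleCoeff q N (k + 1) := by
  obtain ⟨a, ha⟩ : ∃ a : ℤ, a = N + 1 + k := ⟨_, rfl⟩
  obtain ⟨b, hb⟩ : ∃ b : ℤ, b = N + 1 - k := ⟨_, rfl⟩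
  -- All four coefficients are multiples of `(q)_{2N} G(a) G(b) q^{T(k)}`, `G = qPochhammerInv`;
  -- what remains is a polynomial identity in `q`, `q^N` and `q^k`.
  have hG := qPochhammerInv_sub_one hq
  have h₀ : tripleCoeff q N k = qPochhammer q (2 * N) * ((1 - q ^ a) * qPochhammerInv q a)
      * ((1 - q ^ b) * qPochhammerInv q b) * q ^ triangular k := by
    rw [tripleCoeff, show (N : ℤ) + k = a - 1 by omega, show (N : ℤ) - k = b - 1 by omega,
      hG, hG]
  have h₁ : tripleCoeff q N (k - 1) = qPochhammer q (2 * N)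
      * ((1 - q ^ (a - 1)) * ((1 - q ^ a) * qPochhammerInv q a)) * qPochhammerInv q b
      * q ^ (triangular k - k) := by
    rw [tripleCoeff, show (N : ℤ) + (k - 1) = a - 1 - 1 by omega,
      show (N : ℤ) - (k - 1) = b by omega, hG, hG, triangular_sub_one]
  have h₂ : tripleCoeff q N (k + 1) = qPochhammer q (2 * N) * qPochhammerInv q a
      * ((1 - q ^ (b - 1)) * ((1 - q ^ b) * qPochhammerInv q b))
      * q ^ (triangular k + k + 1) := by
    rw [tripleCoeff, show (N : ℤ) + (k + 1) = a by omega,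
      show (N : ℤ) - (k + 1) = b - 1 - 1 by omega, hG, hG, triangular_add_one]
  have h₃ : tripleCoeff q (N + 1) k = qPochhammer q (2 * N) * (1 - q ^ (2 * N + 1))
      * (1 - q ^ (2 * N + 2)) * qPochhammerInv q a * qPochhammerInv q b * q ^ triangular k := by
    rw [tripleCoeff, show 2 * (N + 1) = 2 * N + 1 + 1 by ring, qPochhammer_succ,
      qPochhammer_succ, ha, hb]
    push_cast
    ring
  rw [h₀, h₁, h₂, h₃, ha, hb]
  simp only [zpow_add₀ hq₀, zpow_sub₀ hq₀, zpow_natCast, zpow_one]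
  field_simp
  ring

lemma altSum_tripleCoeff_zero : altSum (tripleCoeff q 0) = 1 := by
  rw [altSum, finsum_eq_single _ 0 fun k hk => by simp [tripleCoeff_zero, hk]]
  simp [tripleCoeff_zero]

lemma altSum_tripleCoeff_succ (hq₀ : q ≠ 0) (hq : ∀ n : ℕ, q ^ (n + 1) ≠ 1) (N : ℕ) :
    altSum (tripleCoeff q (N + 1))
      = (1 - q ^ N) * (1 - q ^ (N + 1)) * altSum (tripleCoeff q N) := by
  rw [funext (tripleCoeff_succ hq₀ hq N), altSum_three_term (hasFiniteSupport_tripleCoeff q N)]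
  ring

lemma altSum_tripleCoeff_succ_eq_zero (hq₀ : q ≠ 0) (hq : ∀ n : ℕ, q ^ (n + 1) ≠ 1) (N : ℕ) :
    altSum (tripleCoeff q (N + 1)) = 0 := by
  induction N with
  | zero => simp [altSum_tripleCoeff_succ hq₀ hq]
  | succ N ih => rw [altSum_tripleCoeff_succ hq₀ hq, ih, mul_zero]

lemma altOddMoment_tripleCoeff_succ (hq₀ : q ≠ 0) (hq : ∀ n : ℕ, q ^ (n + 1) ≠ 1) (N : ℕ) :
    altOddMoment (tripleCoeff q (N + 1)) = (1 - q ^ N) * (1 - q ^ (N + 1))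
      * altOddMoment (tripleCoeff q N) + 2 * q ^ N * (1 - q) * altSum (tripleCoeff q N) := by
  rw [funext (tripleCoeff_succ hq₀ hq N),
    altOddMoment_three_term (hasFiniteSupport_tripleCoeff q N)]
  ring

theorem altOddMoment_tripleCoeff_succ_eq (hq₀ : q ≠ 0) (hq : ∀ n : ℕ, q ^ (n + 1) ≠ 1) (N : ℕ) :
    altOddMoment (tripleCoeff q (N + 1)) = 2 * qPochhammer q (N + 1) * qPochhammer q N := by
  induction N with
  | zero =>
    simp [altOddMoment_tripleCoeff_succ hq₀ hq, altSum_tripleCoeff_zero, qPochhammer]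
  | succ N ih =>
    rw [altOddMoment_tripleCoeff_succ hq₀ hq, ih, altSum_tripleCoeff_succ_eq_zero hq₀ hq,
      qPochhammer_succ q (N + 1), qPochhammer_succ q N]
    ring

end qPochhammer

section jacobiIdentity

open Filter Topology

variable {q : ℂ}

lemma pow_succ_ne_one_of_norm_lt_one (hq : ‖q‖ < 1) (n : ℕ) : q ^ (n + 1) ≠ 1 := by
  intro h
  have h' := pow_lt_one₀ (norm_nonneg q) hq n.succ_ne_zero
  rw [← norm_pow, h, norm_one] at h'
  exact h'.false

lemma tprod_one_sub_pow_ne_zero (hq : ‖q‖ < 1) : ∏' n : ℕ, (1 - q ^ (n + 1)) ≠ 0 := by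
  simp_rw [sub_eq_add_neg]
  refine tprod_one_add_ne_zero_of_summable (fun n => ?_) ?_
  · rw [← sub_eq_add_neg]
    exact sub_ne_zero.2 (pow_succ_ne_one_of_norm_lt_one hq n).symm
  · simpa [norm_neg, norm_pow] using
      (summable_nat_add_iff 1).2 (summable_geometric_of_lt_one (norm_nonneg q) hq)

lemma tendsto_qPochhammer (hq : ‖q‖ < 1) :
    Tendsto (qPochhammer q) atTop (𝓝 (∏' n : ℕ, (1 - q ^ (n + 1)))) :=
  (ModularForm.multipliable_one_sub_pow hq).hasProd.tendsto_prod_nat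

lemma tendsto_qPochhammerInv (hq : ‖q‖ < 1) :
    Tendsto (qPochhammerInv q) atTop (𝓝 (∏' n : ℕ, (1 - q ^ (n + 1)))⁻¹) := by
  have hto : Tendsto Int.toNat atTop atTop :=
    tendsto_atTop_atTop.2 fun n => ⟨n, fun m hm => by omega⟩
  refine (((tendsto_qPochhammer hq).inv₀ (tprod_one_sub_pow_ne_zero hq)).comp hto).congr' ?_
  filter_upwards [eventually_ge_atTop 0] with m hm
  simp [qPochhammerInv, hm]

lemma exists_norm_qPochhammer_le (hq : ‖q‖ < 1) : ∃ C, ∀ n, ‖qPochhammer q n‖ ≤ C := by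
  obtain ⟨C, hC⟩ := isBounded_iff_forall_norm_le.1
    (Metric.isBounded_range_of_tendsto _ (tendsto_qPochhammer hq))
  exact ⟨C, fun n => hC _ ⟨n, rfl⟩⟩

lemma exists_norm_qPochhammerInv_le (hq : ‖q‖ < 1) : ∃ C, ∀ m, ‖qPochhammerInv q m‖ ≤ C := by
  obtain ⟨C, hC⟩ := isBounded_iff_forall_norm_le.1 (Metric.isBounded_range_of_tendsto _
    ((tendsto_qPochhammerInv hq).comp tendsto_natCast_atTop_atTop))
  refine ⟨C, fun m => ?_⟩
  rcases lt_or_ge m 0 with hm | hm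
  · rw [qPochhammerInv_of_neg hm, norm_zero]
    exact (norm_nonneg _).trans (hC _ ⟨0, rfl⟩)
  · lift m to ℕ using hm
    exact hC _ ⟨m, rfl⟩

lemma tendsto_tripleCoeff (hq : ‖q‖ < 1) (k : ℤ) :
    Tendsto (tripleCoeff q · k) atTop
      (𝓝 ((∏' n : ℕ, (1 - q ^ (n + 1)))⁻¹ * q ^ triangular k)) := by
  have hadd : Tendsto (fun N : ℕ => (N : ℤ) + k) atTop atTop :=
    tendsto_atTop_add_const_right _ k tendsto_natCast_atTop_atTop
  have hsub : Tendsto (fun N : ℕ => (N : ℤ) - k) atTop atTop := by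
    simpa only [sub_eq_add_neg] using
      tendsto_atTop_add_const_right _ (-k) tendsto_natCast_atTop_atTop
  have h := ((((tendsto_qPochhammer hq).comp (tendsto_id.const_mul_atTop' two_pos)).mul
    ((tendsto_qPochhammerInv hq).comp hadd)).mul
    ((tendsto_qPochhammerInv hq).comp hsub)).mul_const (q ^ triangular k)
  rw [mul_inv_cancel₀ (tprod_one_sub_pow_ne_zero hq), one_mul] at h
  exact h

lemma exists_norm_tripleCoeff_le (hq : ‖q‖ < 1) :
    ∃ C, ∀ N k, ‖tripleCoeff q N k‖ ≤ C * ‖q‖ ^ triangular k := by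
  obtain ⟨C₁, hC₁⟩ := exists_norm_qPochhammer_le hq
  obtain ⟨C₂, hC₂⟩ := exists_norm_qPochhammerInv_le hq
  refine ⟨C₁ * C₂ * C₂, fun N k => ?_⟩
  have h₁ : 0 ≤ C₁ := (norm_nonneg _).trans (hC₁ 0)
  have h₂ : 0 ≤ C₂ := (norm_nonneg _).trans (hC₂ 0)
  rw [tripleCoeff, norm_mul, norm_mul, norm_mul, norm_zpow]
  have h₁₂ := mul_nonneg h₁ h₂
  gcongr
  exacts [hC₁ _, hC₂ _, hC₂ _]

lemma summable_two_mul_abs_add_one_mul_zpow_triangular {r : ℝ} (hr₀ : 0 < r) (hr₁ : r < 1) :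
    Summable fun k : ℤ => (2 * |(k : ℝ)| + 1) * r ^ triangular k := by
  have hg : Summable fun n : ℕ => r⁻¹ * ((2 * n + 1) * r ^ n) := by
    have h₁ := summable_pow_mul_geometric_of_norm_lt_one 1 (by rwa [Real.norm_of_nonneg hr₀.le])
    have h₀ := summable_geometric_of_lt_one hr₀.le hr₁
    simpa [add_mul, mul_assoc] using ((h₁.mul_left 2).add h₀).mul_left r⁻¹
  have hg' : Summable fun k : ℤ => r⁻¹ * ((2 * k.natAbs + 1) * r ^ k.natAbs) :=
    .of_nat_of_neg (by simpa using hg) (by simpa using hg)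
  refine hg'.of_nonneg_of_le (fun k => by positivity) fun k => ?_
  have hT : r ^ triangular k ≤ r ^ (|k| - 1) :=
    zpow_le_zpow_right_of_le_one₀ hr₀ hr₁.le (abs_sub_one_le_triangular k)
  rw [zpow_sub_one₀ hr₀.ne', ← Int.natCast_natAbs, zpow_natCast] at hT
  rw [← Int.cast_abs, ← Int.natCast_natAbs, Int.cast_natCast]
  calc (2 * (k.natAbs : ℝ) + 1) * r ^ triangular k
      ≤ (2 * k.natAbs + 1) * (r ^ k.natAbs * r⁻¹) := by gcongr
    _ = _ := by ring

theorem tsum_neg_one_zpow_mul_two_mul_add_one_mul_zpow_triangular (hq₀ : q ≠ 0) (hq : ‖q‖ < 1) :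
    ∑' k : ℤ, (-1 : ℂ) ^ k * (2 * k + 1) * q ^ triangular k
      = 2 * (∏' n : ℕ, (1 - q ^ (n + 1))) ^ 3 := by
  set P := ∏' n : ℕ, (1 - q ^ (n + 1))
  obtain ⟨C, hC⟩ := exists_norm_tripleCoeff_le hq
  have hsum (N : ℕ) : ∑' k : ℤ, (-1 : ℂ) ^ k * (2 * k + 1) * tripleCoeff q (N + 1) k
      = 2 * qPochhammer q (N + 1) * qPochhammer q N := by
    rw [tsum_eq_finsum ((hasFiniteSupport_tripleCoeff q (N + 1)).fun_mul_right _),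
      ← altOddMoment, altOddMoment_tripleCoeff_succ_eq hq₀ (pow_succ_ne_one_of_norm_lt_one hq)]
  have hbound (N : ℕ) (k : ℤ) : ‖(-1 : ℂ) ^ k * (2 * k + 1) * tripleCoeff q (N + 1) k‖
      ≤ C * ((2 * |(k : ℝ)| + 1) * ‖q‖ ^ triangular k) := by
    have h2k : ‖(2 * k + 1 : ℂ)‖ ≤ 2 * |(k : ℝ)| + 1 := by
      refine (norm_add_le _ _).trans_eq ?_
      simp [Complex.norm_intCast]
    rw [norm_mul, norm_mul, norm_zpow, norm_neg, norm_one, one_zpow, one_mul, mul_left_comm]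
    exact mul_le_mul h2k (hC _ _) (norm_nonneg _) (by positivity)
  have hlim : Tendsto
      (fun N : ℕ => ∑' k : ℤ, (-1 : ℂ) ^ k * (2 * k + 1) * tripleCoeff q (N + 1) k) atTop
      (𝓝 (∑' k : ℤ, (-1 : ℂ) ^ k * (2 * k + 1) * (P⁻¹ * q ^ triangular k))) :=
    tendsto_tsum_of_dominated_convergence
      ((summable_two_mul_abs_add_one_mul_zpow_triangular (norm_pos_iff.2 hq₀) hq).mul_left C)
      (fun k => ((tendsto_tripleCoeff hq k).comp (tendsto_add_atTop_nat 1)).const_mul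
        ((-1 : ℂ) ^ k * (2 * k + 1)))
      (.of_forall hbound)
  rw [funext hsum] at hlim
  have hlim' : Tendsto (fun N : ℕ => 2 * qPochhammer q (N + 1) * qPochhammer q N) atTop
      (𝓝 (2 * P * P)) :=
    (((tendsto_qPochhammer hq).comp (tendsto_add_atTop_nat 1)).const_mul 2).mul
      (tendsto_qPochhammer hq)
  have h := tendsto_nhds_unique hlim hlim'
  simp_rw [mul_left_comm _ P⁻¹, tsum_mul_left] at h
  rw [inv_mul_eq_iff_eq_mul₀ (tprod_one_sub_pow_ne_zero hq)] at h
  rw [h]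
  ring

end jacobiIdentity

section theta

open scoped Real

lemma neg_one_zpow_eq_cexp (n : ℤ) : (-1 : ℂ) ^ n = cexp (n * (π * I)) := by
  rw [Complex.exp_int_mul, Complex.exp_pi_mul_I]

lemma thetaJ_eq_cexp_mul_jacobiTheta₂ (τ z : ℂ) :
    thetaJ τ z = cexp (π * I * τ / 4 + π * I * z) * jacobiTheta₂ (z + (τ / 2 + 1 / 2)) τ := by
  rw [thetaJ, jacobiTheta₂, ← tsum_mul_left]
  refine tsum_congr fun n => ?_
  rw [jacobiTheta₂_term, neg_one_zpow_eq_cexp, ← Complex.exp_add, ← Complex.exp_add]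
  congr 1
  ring

lemma hasDerivAt_thetaJ_zero {τ : ℂ} (hτ : 0 < τ.im) :
    HasDerivAt (thetaJ τ) (cexp (π * I * τ / 4)
      * (π * I * jacobiTheta₂ (τ / 2 + 1 / 2) τ + jacobiTheta₂' (τ / 2 + 1 / 2) τ)) 0 := by
  have h₁ : HasDerivAt (fun z : ℂ => cexp (π * I * τ / 4 + π * I * z))
      (cexp (π * I * τ / 4) * (π * I)) 0 :=
    (((hasDerivAt_id (0 : ℂ)).const_mul (π * I)).const_add _).cexp.congr_deriv (by simp)
  have h₂ : HasDerivAt (fun z : ℂ => jacobiTheta₂ (z + (τ / 2 + 1 / 2)) τ)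
      (jacobiTheta₂' (τ / 2 + 1 / 2) τ) 0 :=
    .comp_add_const (0 : ℂ) _
      (by simpa only [zero_add] using hasDerivAt_jacobiTheta₂_fst (τ / 2 + 1 / 2) hτ)
  rw [funext (thetaJ_eq_cexp_mul_jacobiTheta₂ τ)]
  refine (h₁.fun_mul h₂).congr_deriv ?_
  rw [mul_zero, add_zero, zero_add]
  ring

lemma jacobiTheta₂_term_half_period (τ : ℂ) (n : ℤ) :
    jacobiTheta₂_term n (τ / 2 + 1 / 2) τ
      = (-1 : ℂ) ^ n * cexp (2 * π * I * τ) ^ triangular n := by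
  have hT : (2 * triangular n : ℂ) = n * (n + 1) := by exact_mod_cast two_mul_triangular n
  rw [jacobiTheta₂_term, neg_one_zpow_eq_cexp, ← Complex.exp_int_mul, ← Complex.exp_add]
  congr 1
  linear_combination -(π * I * τ) * hT

lemma pi_mul_I_mul_jacobiTheta₂_add_jacobiTheta₂'_half_period {τ : ℂ} (hτ : 0 < τ.im) :
    π * I * jacobiTheta₂ (τ / 2 + 1 / 2) τ + jacobiTheta₂' (τ / 2 + 1 / 2) τ
      = 2 * π * I * (∏' n : ℕ, (1 - cexp (2 * π * I * τ) ^ (n + 1))) ^ 3 := by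
  have h := ((hasSum_jacobiTheta₂_term (τ / 2 + 1 / 2) hτ).mul_left (π * I)).add
    (hasSum_jacobiTheta₂'_term (τ / 2 + 1 / 2) hτ)
  have hq : ‖cexp (2 * π * I * τ)‖ < 1 := UpperHalfPlane.norm_exp_two_pi_I_lt_one ⟨τ, hτ⟩
  have hJ := tsum_neg_one_zpow_mul_two_mul_add_one_mul_zpow_triangular (Complex.exp_ne_zero _) hq
  calc _ = ∑' k : ℤ,
        π * I * ((-1 : ℂ) ^ k * (2 * k + 1) * cexp (2 * π * I * τ) ^ triangular k) := by
        rw [← h.tsum_eq]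
        exact tsum_congr fun k => by rw [jacobiTheta₂'_term, jacobiTheta₂_term_half_period]; ring
    _ = _ := by
        rw [tsum_mul_left, hJ]
        ring

end theta

/-- `(2πi)^{−1} ∂ϑ/∂z(τ,0) = η(τ)³`:
`∂ϑ/∂z(τ,0) = 2πi · exp(πiτ/4) · ∏_{n≥1}(1 − exp(2πinτ))³`. -/
theorem statement12 (τ : ℂ) (hτ : 0 < τ.im) :
    deriv (thetaJ τ) 0 =
      2 * Real.pi * Complex.I * Complex.exp (Real.pi * Complex.I * τ / 4) *
        (∏' n : ℕ, (1 - Complex.exp (2 * Real.pi * Complex.I * τ) ^ (n + 1))) ^ 3 := by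
  rw [(hasDerivAt_thetaJ_zero hτ).deriv,
    pi_mul_I_mul_jacobiTheta₂_add_jacobiTheta₂'_half_period hτ]
  ring
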